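/- For every integer k, the polynomial f_{2,k}(x) = x^3 - (27k^2+27k+7)x + (2k+1)(27k^2+27k+7) is irreducible over Q. -/

import Mathlib

/-! Reduction modulo 2: the polynomial is monic with integer coefficients, and both `δ₂` and
`(2k+1)δ₂` are odd because `k(k+1)` is even, so modulo 2 it becomes `X³ + X + 1`, which has no
root in `𝔽₂` and hence is irreducible. A monic integer polynomial with irreducible reduction is
irreducible over `ℤ`, hence over `ℚ` by Gauss's lemma. -/

open Polynomial

lemma irreducible_X_pow_three_add_X_add_one_zmod_two :
    Irreducible (X ^ 3 + X + 1 : (ZMod 2)[X]) := by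
  apply irreducible_of_degree_le_three_of_not_isRoot
  · have hdeg : (X ^ 3 + X + 1 : (ZMod 2)[X]).natDegree = 3 := by compute_degree!
    simp [hdeg]
  · intro x
    simp only [IsRoot, eval_add, eval_pow, eval_X, eval_one]
    revert x
    decide

lemma irreducible_X_pow_three_sub_C_mul_X_add_C_int_of_odd {a b : ℤ} (ha : Odd a) (hb : Odd b) :
    Irreducible (X ^ 3 - C a * X + C b : ℤ[X]) := by
  refine Monic.irreducible_of_irreducible_map (Int.castRingHom (ZMod 2)) _ (by monicity!) ?_
  have hmod2 : (X ^ 3 - C a * X + C b : ℤ[X]).map (Int.castRingHom (ZMod 2)) = X ^ 3 + X + 1 := by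
    simp only [Polynomial.map_add, Polynomial.map_sub, Polynomial.map_mul, Polynomial.map_pow,
      map_X, map_C, Int.coe_castRingHom, ha.intCast_zmod_two, hb.intCast_zmod_two, map_one, one_mul,
      CharTwo.sub_eq_add]
  exact hmod2 ▸ irreducible_X_pow_three_add_X_add_one_zmod_two

lemma irreducible_X_pow_three_sub_C_mul_X_add_C_rat_of_odd {a b : ℤ} (ha : Odd a) (hb : Odd b) :
    Irreducible (X ^ 3 - C (a : ℚ) * X + C (b : ℚ)) := by
  have hmonic : (X ^ 3 - C a * X + C b : ℤ[X]).Monic := by monicity!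
  have h := (IsPrimitive.Int.irreducible_iff_irreducible_map_cast hmonic.isPrimitive).mp
    (irreducible_X_pow_three_sub_C_mul_X_add_C_int_of_odd ha hb)
  simpa only [Polynomial.map_add, Polynomial.map_sub, Polynomial.map_mul, Polynomial.map_pow,
    map_X, map_C, Int.coe_castRingHom] using h

theorem f2k_irreducible (k : ℤ) :
    Irreducible (X ^ 3 - C (27 * (k : ℚ) ^ 2 + 27 * k + 7) * X
      + C ((2 * (k : ℚ) + 1) * (27 * (k : ℚ) ^ 2 + 27 * k + 7))) := by
  have hδ : Odd (27 * k ^ 2 + 27 * k + 7) := by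
    rw [show 27 * k ^ 2 + 27 * k + 7 = 27 * (k * (k + 1)) + 7 by ring]
    exact ((Int.even_mul_succ_self k).mul_left 27).add_odd (by decide)
  exact_mod_cast irreducible_X_pow_three_sub_C_mul_X_add_C_rat_of_odd hδ
    ((odd_two_mul_add_one k).mul hδ)
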